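/- Let G be a finite simple graph. Then wsat(G, K_{1,2}) = 1 if and only if exactly one connected component of G contains an edge. -/

import Mathlib

open MeasureTheory Filter

namespace WsatRandom

/-- `G'` contains a subgraph isomorphic to `H` that contains the edge `e`. -/
def ContainsCopyWithEdge {V W : Type*} (G' : SimpleGraph V) (H : SimpleGraph W)
    (e : Sym2 V) : Prop :=
  ∃ f : W → V, Function.Injective f ∧ (∀ a b, H.Adj a b → G'.Adj (f a) (f b)) ∧
    ∃ a b, H.Adj a b ∧ e = s(f a, f b)

/-- `F` is a weakly `(G,H)`-saturated spanning subgraph of `G`: there is an ordering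
`e_1, …, e_m` of the edges of `G` not in `F` such that adding them one by one, each newly
added edge lies in a copy of `H`. -/
def WeaklySaturated {V W : Type*} (G F : SimpleGraph V) (H : SimpleGraph W) : Prop :=
  F ≤ G ∧ ∃ es : List (Sym2 V), es.Nodup ∧
    (∀ e, e ∈ es ↔ e ∈ G.edgeSet \ F.edgeSet) ∧
    ∀ i : Fin es.length,
      ContainsCopyWithEdge
        (F ⊔ SimpleGraph.fromEdgeSet {e | e ∈ es.take ((i : ℕ) + 1)}) H (es.get i)

/-- The weak saturation number: the minimum number of edges of a weakly `(G,H)`-saturated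
spanning subgraph of `G`. -/
noncomputable def wsat {V W : Type*} (G : SimpleGraph V) (H : SimpleGraph W) : ℕ :=
  sInf {m | ∃ F, WeaklySaturated G F H ∧ F.edgeSet.ncard = m}

/-- Minimum degree of a graph. -/
noncomputable def minDeg {W : Type*} (H : SimpleGraph W) : ℕ :=
  sInf {d | ∃ v, d = {u | H.Adj v u}.ncard}

/-- The Bernoulli(p) measure on `Bool`. -/
noncomputable def bernoulliMeasure (p : ℝ) : Measure Bool :=
  ENNReal.ofReal p • Measure.dirac true + ENNReal.ofReal (1 - p) • Measure.dirac false

/-- The product Bernoulli(p) measure on edge-indicator functions; its pushforward under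
`graphOf` is the Erdős–Rényi random graph `G(n,p)`. -/
noncomputable def edgeMeasure (n : ℕ) (p : ℝ) : Measure (Sym2 (Fin n) → Bool) :=
  Measure.pi fun _ => bernoulliMeasure p

/-- The graph on `[n]` determined by an edge-indicator function. -/
def graphOf {n : ℕ} (ω : Sym2 (Fin n) → Bool) : SimpleGraph (Fin n) :=
  SimpleGraph.fromEdgeSet {e | ω e = true}

/-- The star `K_{1,t}`. -/
def star (t : ℕ) : SimpleGraph (Fin 1 ⊕ Fin t) :=
  completeBipartiteGraph (Fin 1) (Fin t)

/-
When `e_i` is added to `F ⊔ {e_1, …, e_{i-1}}` and lies in a copy of `K_{1,2}`, the other edge of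
that copy is an edge of `F` or an earlier `e_j` at an endpoint of `e_i`. By induction along the
ordering, every edge of `G` lies in the component of an edge of `F`: so `wsat ≥ 1` as soon as `G`
has an edge, and a weakly saturated `F` with a single edge forces all edges of `G` into one
component.
Conversely, if every edge lies in the component of an edge `u₀v₀`, take `F = {u₀v₀}` and add the
other edges in order of their distance from `u₀`: an edge `ab` with `d(u₀,a) ≤ d(u₀,b)` forms a
`K_{1,2}` centred at `a` with `u₀v₀` if `a = u₀`, and otherwise with the first edge of a shortest
path from `a` to `u₀`, which comes earlier.
-/

open SimpleGraph

section

variable {V W : Type*}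

theorem _root_.SimpleGraph.Reachable.exists_adj_dist_lt {G : SimpleGraph V} {u v : V}
    (h : G.Reachable u v) (hne : u ≠ v) : ∃ w, G.Adj v w ∧ G.dist u w < G.dist u v := by
  obtain ⟨p, hp⟩ := h.symm.exists_walk_length_eq_dist
  cases p with
  | nil => exact absurd rfl hne
  | cons hadj q =>
    refine ⟨_, hadj, ?_⟩
    rw [G.dist_comm (v := v), ← hp, Walk.length_cons, G.dist_comm]
    exact Nat.lt_succ_of_le (dist_le q)

theorem ContainsCopyWithEdge.mono {K K' : SimpleGraph V} {H : SimpleGraph W} {e : Sym2 V}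
    (hK : K ≤ K') (h : ContainsCopyWithEdge K H e) : ContainsCopyWithEdge K' H e :=
  let ⟨f, hinj, hmap, hedge⟩ := h
  ⟨f, hinj, fun a b hab => hK (hmap a b hab), hedge⟩

theorem star_two_adj_inl_inr (i : Fin 1) (j : Fin 2) : (star 2).Adj (.inl i) (.inr j) := by
  simp [star]

theorem containsCopyWithEdge_star_two_iff {K : SimpleGraph V} {e : Sym2 V} :
    ContainsCopyWithEdge K (star 2) e ↔
      ∃ c x y, K.Adj c x ∧ K.Adj c y ∧ x ≠ y ∧ e = s(c, x) := by
  constructor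
  · rintro ⟨f, hinj, hmap, a, b, hab, rfl⟩
    have hcenter : ∀ i j, ∃ c x y, K.Adj c x ∧ K.Adj c y ∧ x ≠ y ∧
        s(f (.inl i), f (.inr j)) = s(c, x) := fun i j =>
      ⟨_, _, f (.inr (j + 1)), hmap _ _ (star_two_adj_inl_inr i j),
        hmap _ _ (star_two_adj_inl_inr i _),
        fun h => absurd (Sum.inr_injective (hinj h)) (by fin_cases j <;> decide), rfl⟩
    rcases a with i | j <;> rcases b with i' | j' <;> simp [star] at hab
    · exact hcenter i j'
    · rw [Sym2.eq_swap]
      exact hcenter i' j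
  · rintro ⟨c, x, y, hx, hy, hxy, rfl⟩
    refine ⟨Sum.elim (fun _ => c) ![x, y], ?_, ?_, .inl 0, .inr 0, star_two_adj_inl_inr 0 0, rfl⟩
    · rintro (i | i) (j | j) h <;> fin_cases i <;> fin_cases j <;>
        simp_all [hx.ne, hy.ne, hx.ne.symm, hy.ne.symm, eq_comm]
    · rintro (i | i) (j | j) h <;> fin_cases i <;> fin_cases j <;>
        simp_all [star, hx.symm, hy.symm]

theorem WeaklySaturated.forall_mem_edgeSet {G F : SimpleGraph V} {H : SimpleGraph W}
    {P : Sym2 V → Prop} (hws : WeaklySaturated G F H) (hF : ∀ e ∈ F.edgeSet, P e)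
    (hstep : ∀ (K : SimpleGraph V) (e : Sym2 V), K ≤ G → (∀ e' ∈ K.edgeSet, e' ≠ e → P e') →
      ContainsCopyWithEdge K H e → P e) :
    ∀ e ∈ G.edgeSet, P e := by
  obtain ⟨hFG, es, -, hmem, hcopy⟩ := hws
  have hes : ∀ i (hi : i < es.length), P es[i] := by
    intro i
    induction i using Nat.strong_induction_on with
    | _ i ih =>
      intro hi
      refine hstep _ _ ?_ ?_ (hcopy ⟨i, hi⟩)
      · refine sup_le hFG fun a b hab => ?_
        rw [fromEdgeSet_adj] at hab
        exact ((hmem _).1 (List.mem_of_mem_take hab.1)).1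
      · intro e' he' hne
        rw [edgeSet_sup, edgeSet_fromEdgeSet] at he'
        rcases he' with he' | he'
        · exact hF e' he'
        · obtain ⟨j, hj, rfl⟩ := List.mem_take_iff_getElem.1 he'.1
          have hji : j ≠ i := by rintro rfl; exact hne rfl
          exact ih j (by simp at hj; omega) _
  intro e he
  by_cases heF : e ∈ F.edgeSet
  · exact hF e heF
  · obtain ⟨i, hi, rfl⟩ := List.getElem_of_mem ((hmem e).2 ⟨he, heF⟩)
    exact hes i hi

theorem weaklySaturated_of_rank {G F : SimpleGraph V} {H : SimpleGraph W}
    (hfin : G.edgeSet.Finite) (hFG : F ≤ G) (r : Sym2 V → ℕ)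
    (hcopy : ∀ e ∈ G.edgeSet \ F.edgeSet, ContainsCopyWithEdge
      (F ⊔ fromEdgeSet (insert e {e' ∈ G.edgeSet | r e' < r e})) H e) :
    WeaklySaturated G F H := by
  classical
  have hdiff : (G.edgeSet \ F.edgeSet).Finite := hfin.sdiff
  set es := hdiff.toFinset.toList.mergeSort (fun e e' => r e ≤ r e')
  have hperm := List.mergeSort_perm hdiff.toFinset.toList (fun e e' => r e ≤ r e')
  have hmem : ∀ e, e ∈ es ↔ e ∈ G.edgeSet \ F.edgeSet := fun e => by
    rw [hperm.mem_iff, Finset.mem_toList, Set.Finite.mem_toFinset]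
  have hsorted : es.Pairwise (fun e e' => r e ≤ r e') :=
    (List.pairwise_mergeSort (fun _ _ _ h h' => by simp_all; omega) (fun _ _ => by simp; omega)
      _).imp (by simp)
  refine ⟨hFG, es, hperm.nodup_iff.2 (Finset.nodup_toList _), hmem, fun i =>
    (hcopy _ ((hmem _).1 (List.getElem_mem i.2))).mono (sup_le le_sup_left fun a b hab => ?_)⟩
  obtain ⟨hab, hne⟩ := (fromEdgeSet_adj _).1 hab
  have hi : es[i] ∈ es.take (i + 1) := List.mem_take_iff_getElem.2 ⟨i, by simp, rfl⟩
  by_cases hF : s(a, b) ∈ F.edgeSet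
  · exact .inl hF
  refine .inr ((fromEdgeSet_adj _).2 ⟨?_, hne⟩)
  rcases hab with heq | ⟨hG, hlt⟩
  · exact heq ▸ hi
  · by_contra hnot
    rw [← List.take_append_drop (i + 1) es] at hsorted hmem
    have hdrop := (List.mem_append.1 ((hmem _).2 ⟨hG, hF⟩)).resolve_left hnot
    exact ((List.pairwise_append.1 hsorted).2.2 _ hi _ hdrop).not_gt hlt

theorem WeaklySaturated.exists_adj_reachable_of_star_two {G F : SimpleGraph V}
    (hws : WeaklySaturated G F (star 2)) {a b : V} (hab : G.Adj a b) :
    ∃ u v, F.Adj u v ∧ G.Reachable u a := by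
  refine hws.forall_mem_edgeSet (P := fun e => ∀ x ∈ e, ∃ u v, F.Adj u v ∧ G.Reachable u x)
    ?_ ?_ s(a, b) hab a (Sym2.mem_mk_left a b)
  · rintro ⟨u, v⟩ huv x hx
    rcases Sym2.mem_iff.1 hx with rfl | rfl
    exacts [⟨x, v, huv, .rfl⟩, ⟨u, x, huv, (hws.1 huv).reachable⟩]
  · rintro K e hKG hP hcopy
    obtain ⟨c, x, y, hx, hy, hxy, rfl⟩ := containsCopyWithEdge_star_two_iff.1 hcopy
    obtain ⟨u, v, huv, hu⟩ := hP s(c, y) hy (by rw [Ne, Sym2.congr_right]; exact hxy.symm) c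
      (Sym2.mem_mk_left c y)
    intro z hz
    rcases Sym2.mem_iff.1 hz with rfl | rfl
    exacts [⟨u, v, huv, hu⟩, ⟨u, v, huv, hu.trans (hKG hx).reachable⟩]

theorem weaklySaturated_edge_star_two {G : SimpleGraph V} {u₀ v₀ : V}
    (hfin : G.edgeSet.Finite) (h₀ : G.Adj u₀ v₀) (hreach : ∀ a b, G.Adj a b → G.Reachable u₀ a) :
    WeaklySaturated G (edge u₀ v₀) (star 2) := by
  refine weaklySaturated_of_rank hfin ((edge_le_iff G).2 (.inr h₀))
    (fun e => (e.map (G.dist u₀)).inf) ?_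
  intro e ⟨hab, hF⟩
  induction e using Sym2.ind with | _ a b
  wlog hle : G.dist u₀ a ≤ G.dist u₀ b generalizing a b
  · rw [Sym2.eq_swap (a := a)] at hF ⊢
    exact this b a hab.symm hF (le_of_not_ge hle)
  rw [containsCopyWithEdge_star_two_iff]
  suffices ∃ w, w ≠ b ∧ G.Adj a w ∧ (w = v₀ ∧ a = u₀ ∨ G.dist u₀ w < G.dist u₀ a) by
    obtain ⟨w, hwb, haw, hw⟩ := this
    refine ⟨a, b, w, .inr ((fromEdgeSet_adj _).2 ⟨Set.mem_insert _ _, hab.ne⟩),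
      ?_, hwb.symm, rfl⟩
    rcases hw with ⟨rfl, rfl⟩ | hw
    · exact .inl ((edge_adj ..).2 ⟨.inl ⟨rfl, rfl⟩, h₀.ne⟩)
    · refine .inr ((fromEdgeSet_adj _).2 ⟨.inr ⟨haw, ?_⟩, haw.ne⟩)
      simp only [Sym2.map_mk, Sym2.inf_mk]
      omega
  by_cases ha : a = u₀
  · subst ha
    refine ⟨v₀, ?_, h₀, .inl ⟨rfl, rfl⟩⟩
    rintro rfl
    exact hF (by simp [edgeSet_edge_of_ne h₀.ne])
  · obtain ⟨w, haw, hw⟩ := (hreach a b hab).exists_adj_dist_lt (Ne.symm ha)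
    exact ⟨w, by rintro rfl; omega, haw, .inr hw⟩

theorem wsat_le_ncard {G F : SimpleGraph V} {H : SimpleGraph W} (h : WeaklySaturated G F H) :
    wsat G H ≤ F.edgeSet.ncard :=
  Nat.sInf_le ⟨F, h, rfl⟩

theorem wsat_ne_zero {G F : SimpleGraph V} {H : SimpleGraph W} (hfin : G.edgeSet.Finite)
    (h : WeaklySaturated G F H) (hbot : ¬WeaklySaturated G ⊥ H) : wsat G H ≠ 0 := by
  intro h0
  rcases Nat.sInf_eq_zero.1 h0 with ⟨F', hF', hcard⟩ | hempty
  · have : F'.edgeSet = ∅ := (Set.ncard_eq_zero (hfin.subset (edgeSet_mono hF'.1))).1 hcard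
    exact hbot (edgeSet_eq_empty.1 this ▸ hF')
  · exact hempty.subset ⟨F, h, rfl⟩

theorem exists_weaklySaturated_ncard_eq_wsat {G : SimpleGraph V} {H : SimpleGraph W}
    (h : wsat G H ≠ 0) : ∃ F, WeaklySaturated G F H ∧ F.edgeSet.ncard = wsat G H :=
  Nat.sInf_mem (Nat.nonempty_of_pos_sInf (Nat.pos_of_ne_zero h))

end

/-- `wsat(G, K_{1,2}) = 1` iff exactly one connected component of `G` contains
an edge. -/
theorem stmt_17 {V : Type*} [Fintype V] (G : SimpleGraph V) :
    wsat G (star 2) = 1 ↔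
      ∃! c : G.ConnectedComponent, ∃ u v : V, G.Adj u v ∧ G.connectedComponentMk u = c := by
  constructor
  · intro h
    obtain ⟨F, hws, hcard⟩ := exists_weaklySaturated_ncard_eq_wsat (h ▸ one_ne_zero)
    obtain ⟨e, he⟩ := Set.ncard_eq_one.1 (hcard.trans h)
    induction e using Sym2.ind with | _ u₀ v₀
    have hF : ∀ {u v}, F.Adj u v ↔ s(u, v) = s(u₀, v₀) := by
      intro u v
      rw [← mem_edgeSet, he, Set.mem_singleton_iff]
    have h₀ : G.Adj u₀ v₀ := hws.1 (hF.2 rfl)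
    refine ⟨G.connectedComponentMk u₀, ⟨u₀, v₀, h₀, rfl⟩, ?_⟩
    rintro _ ⟨a, b, hab, rfl⟩
    obtain ⟨u, v, huv, hu⟩ := hws.exists_adj_reachable_of_star_two hab
    rcases Sym2.eq_iff.1 (hF.1 huv) with ⟨rfl, -⟩ | ⟨rfl, -⟩
    exacts [(ConnectedComponent.sound hu).symm,
      (ConnectedComponent.sound (h₀.reachable.trans hu)).symm]
  · rintro ⟨_, ⟨u₀, v₀, h₀, rfl⟩, huniq⟩
    have hws := weaklySaturated_edge_star_two (Set.toFinite _) h₀ fun a b hab =>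
      ConnectedComponent.exact (huniq _ ⟨a, b, hab, rfl⟩).symm
    have hle := wsat_le_ncard hws
    have hne := wsat_ne_zero (Set.toFinite _) hws fun hbot => by
      simpa using hbot.exists_adj_reachable_of_star_two h₀
    rw [edgeSet_edge_of_ne h₀.ne, Set.ncard_singleton] at hle
    omega
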